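/- Fix ε̄ ∈ ℝ, ħ > 0, and an integer ℓ ≥ 1. For every polynomial P ∈ ℂ[ρ₁, ρ₂, …], the set of tuples (j₁,…,j_{ℓ−1}) ∈ ℕ^{ℓ−1} such that Ŝ(j₁,…,j_{ℓ−1} | ε̄, ħ)P ≠ 0 is finite; consequently T̂_ℓ(ε̄,ħ)P := Σ_{(j₁,…,j_{ℓ−1}) ∈ ℕ^{ℓ−1}} Ŝ(j₁,…,j_{ℓ−1}|ε̄,ħ)P is a well-defined polynomial and T̂_ℓ(ε̄,ħ) is a linear operator on ℂ[ρ₁, ρ₂, …]. -/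

import Mathlib

/-!
Nazarov–Sklyanin operators on ℂ[ρ₁, ρ₂, …] pairwise commute.
-/

open MvPolynomial

noncomputable section

/-- The polynomial ring ℂ[ρ₁, ρ₂, …] in countably many commuting variables. -/
abbrev MvP : Type := MvPolynomial ℕ+ ℂ

/-- Creation operator ρ̂ₖ : multiplication by ρₖ. -/
def creOp (k : ℕ+) : MvP →ₗ[ℂ] MvP := LinearMap.mulLeft ℂ (X k)

/-- Annihilation operator ρ̂₋ₖ := hb·k·∂/∂ρₖ. -/
def annOp (hb : ℝ) (k : ℕ+) : MvP →ₗ[ℂ] MvP :=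
  ((hb * ((k : ℕ) : ℝ) : ℝ) : ℂ) • (pderiv (R := ℂ) k).toLinearMap

/-- The step operator for a step of heights j → j': a creation operator ρ̂_{j'−j} if j < j',
an annihilation operator if j' < j, and ε̄·j·Id for a slide (j = j', using ρ̂₀ = 0). -/
def stepOp (ε hb : ℝ) (j j' : ℕ) : MvP →ₗ[ℂ] MvP :=
  if hlt : j < j' then creOp ⟨j' - j, by omega⟩
  else if hgt : j' < j then annOp hb ⟨j - j', by omega⟩
  else ((ε * (j : ℝ) : ℝ) : ℂ) • (LinearMap.id : MvP →ₗ[ℂ] MvP)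

/-- The Nazarov–Sklyanin path operator attached to a list of heights j₀, j₁, …, j_ℓ:
the composition A₁ ∘ ⋯ ∘ A_ℓ where A_i is the step operator of j_{i-1} → j_i. -/
def pathOp (ε hb : ℝ) : List ℕ → (MvP →ₗ[ℂ] MvP)
  | j :: j' :: rest => stepOp ε hb j j' ∘ₗ pathOp ε hb (j' :: rest)
  | _ => LinearMap.id

/-- The ℓ-th Nazarov–Sklyanin operator: `T̂_ℓ(ε̄,hb) P = Σ_{(j₁,…,j_{ℓ−1}) ∈ ℕ^{ℓ−1}}
Ŝ(j₁,…,j_{ℓ−1} | ε̄, hb) P`, with boundary heights j₀ = j_ℓ = 0.  (The sum has finitely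
many nonzero terms, so the `finsum` below is the actual sum.) -/
def NSop (ε hb : ℝ) (ℓ : ℕ) (P : MvP) : MvP :=
  ∑ᶠ t : Fin (ℓ - 1) → ℕ, pathOp ε hb ((0 : ℕ) :: (List.ofFn t ++ [0])) P

end


open MvPolynomial

noncomputable section

def wt (s : ℕ+ →₀ ℕ) : ℕ := s.sum fun k e => e * (k : ℕ)

lemma wt_add (a b : ℕ+ →₀ ℕ) : wt (a + b) = wt a + wt b := by
  unfold wt
  rw [Finsupp.sum_add_index] <;> intros <;> simp [add_mul]

lemma wt_single (k : ℕ+) : wt (Finsupp.single k 1) = (k : ℕ) := by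
  simp [wt, Finsupp.sum_single_index]

def W (P : MvP) : ℕ := P.support.sup wt

lemma wt_le_W {P : MvP} {s : ℕ+ →₀ ℕ} (h : s ∈ P.support) : wt s ≤ W P :=
  Finset.le_sup h

lemma W_X_mul (k : ℕ+) (Q : MvP) : W (X k * Q) ≤ (k : ℕ) + W Q := by
  unfold W
  rw [support_X_mul, Finset.sup_map]
  apply Finset.sup_le
  intro s hs
  simp only [Function.comp_apply, addLeftEmbedding_apply]
  rw [wt_add, wt_single]
  exact Nat.add_le_add_left (wt_le_W hs) _

lemma W_smul (c : ℂ) (Q : MvP) : W (c • Q) ≤ W Q :=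
  Finset.sup_mono MvPolynomial.support_smul

lemma wt_pderiv (i : ℕ+) (Q : MvP) {m : ℕ+ →₀ ℕ}
    (hm : m ∈ ((pderiv (R := ℂ) i) Q).support) : (i : ℕ) + wt m ≤ W Q := by
  classical
  have hQ : (pderiv (R := ℂ) i) Q =
      ∑ s ∈ Q.support, monomial (s - Finsupp.single i 1) (coeff s Q * (s i : ℂ)) := by
    conv_lhs => rw [Q.as_sum]
    rw [map_sum]
    exact Finset.sum_congr rfl fun s _ => pderiv_monomial
  rw [hQ] at hm
  obtain ⟨s, hs, hm2⟩ := Finset.mem_biUnion.mp (MvPolynomial.support_sum hm)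
  rw [support_monomial] at hm2
  split_ifs at hm2 with hc
  · simp at hm2
  · have hsi : s i ≠ 0 := by
      intro h0; exact hc (by simp [h0])
    have hme : m = s - Finsupp.single i 1 := Finset.mem_singleton.mp hm2
    have hsum : Finsupp.single i 1 + m = s := by
      rw [hme]; ext a
      rcases eq_or_ne i a with rfl | hne
      · simp only [Finsupp.add_apply, Finsupp.tsub_apply, Finsupp.single_eq_same]; omega
      · simp [Finsupp.single_apply, hne]
    calc (i : ℕ) + wt m = wt (Finsupp.single i 1 + m) := by rw [wt_add, wt_single]
    _ = wt s := by rw [hsum]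
    _ ≤ W Q := wt_le_W hs

noncomputable section

lemma stepOp_apply_ne_zero {ε hb : ℝ} {j j' : ℕ} {Q : MvP}
    (h : stepOp ε hb j j' Q ≠ 0) : Q ≠ 0 := by
  rintro rfl; exact h (map_zero _)

/-- Quantitative bound: head + weighted degree of result ≤ weighted degree of input. -/
lemma pathOp_W_bound (ε hb : ℝ) (P : MvP) :
    ∀ (rest : List ℕ) (j : ℕ), (j :: rest).getLast (List.cons_ne_nil _ _) = 0 →
      pathOp ε hb (j :: rest) P ≠ 0 →
      j + W (pathOp ε hb (j :: rest) P) ≤ W P := by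
  intro rest
  induction rest with
  | nil =>
      intro j hlast hne
      simp only [List.getLast_singleton] at hlast
      subst hlast
      simpa [pathOp] using le_refl (W P)
  | cons j' rest' ih =>
      intro j hlast hne
      have hlast' : (j' :: rest').getLast (List.cons_ne_nil _ _) = 0 := by
        rwa [List.getLast_cons (List.cons_ne_nil _ _)] at hlast
      have hpe : pathOp ε hb (j :: j' :: rest') P
          = stepOp ε hb j j' (pathOp ε hb (j' :: rest') P) := rfl
      set Q := pathOp ε hb (j' :: rest') P with hQdef
      rw [hpe] at hne ⊢
      have hQne : Q ≠ 0 := stepOp_apply_ne_zero hne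
      have hIH : j' + W Q ≤ W P := ih j' hlast' hQne
      unfold stepOp at hne ⊢
      split_ifs at hne ⊢ with h1 h2
      · -- creation
        simp only [creOp, LinearMap.mulLeft_apply]
        refine le_trans (Nat.add_le_add_left (W_X_mul _ Q) j) ?_
        show j + (j' - j + W Q) ≤ W P
        omega
      · -- annihilation
        simp only [annOp, LinearMap.smul_apply, Derivation.coeFn_coe] at hne ⊢
        set i : ℕ+ := ⟨j - j', by omega⟩ with hidef
        have hpne : (MvPolynomial.pderiv (R := ℂ) i) Q ≠ 0 := by
          intro h0; rw [h0, smul_zero] at hne; exact hne rfl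
        have hns : ((MvPolynomial.pderiv (R := ℂ) i) Q).support.Nonempty :=
          MvPolynomial.support_nonempty.mpr hpne
        obtain ⟨m, hm, hsup⟩ := Finset.exists_mem_eq_sup _ hns wt
        have hb1 : (i : ℕ) + wt m ≤ W Q := wt_pderiv i Q hm
        have hb2 : W ((((hb * ((i : ℕ) : ℝ) : ℝ)) : ℂ) • (MvPolynomial.pderiv (R := ℂ) i) Q)
            ≤ W ((MvPolynomial.pderiv (R := ℂ) i) Q) := W_smul _ _
        have hWps : W ((MvPolynomial.pderiv (R := ℂ) i) Q) = wt m := hsup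
        have hi : (i : ℕ) = j - j' := rfl
        omega
      · -- slide
        have hjj : j = j' := by omega
        simp only [LinearMap.smul_apply, LinearMap.id_coe, id_eq] at hne ⊢
        have := W_smul ((ε * (j : ℝ) : ℝ) : ℂ) Q
        omega

lemma pathOp_mem_bound (ε hb : ℝ) (P : MvP) :
    ∀ (rest : List ℕ) (j : ℕ), (j :: rest).getLast (List.cons_ne_nil _ _) = 0 →
      pathOp ε hb (j :: rest) P ≠ 0 →
      ∀ m ∈ j :: rest, m ≤ W P := by
  intro rest
  induction rest with
  | nil =>
      intro j hlast hne m hm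
      simp only [List.getLast_singleton] at hlast
      simp only [List.mem_singleton] at hm
      omega
  | cons j' rest' ih =>
      intro j hlast hne m hm
      have hlast' : (j' :: rest').getLast (List.cons_ne_nil _ _) = 0 := by
        rwa [List.getLast_cons (List.cons_ne_nil _ _)] at hlast
      have hQne : pathOp ε hb (j' :: rest') P ≠ 0 :=
        stepOp_apply_ne_zero (Q := pathOp ε hb (j' :: rest') P) hne
      rcases List.mem_cons.mp hm with rfl | hm'
      · have := pathOp_W_bound ε hb P (j' :: rest') m hlast hne
        omega
      · exact ih j' hlast' hQne m hm'

end


/-- For ε̄ ∈ ℝ, ħ > 0 and ℓ ≥ 1: for every polynomial P the set of interior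
height tuples (j₁,…,j_{ℓ−1}) ∈ ℕ^{ℓ−1} with Ŝ(j₁,…,j_{ℓ−1}|ε̄,ħ)P ≠ 0 is finite; consequently
T̂_ℓ(ε̄,ħ)P := Σ_{(j₁,…,j_{ℓ−1})} Ŝ(j₁,…,j_{ℓ−1}|ε̄,ħ)P is a well-defined polynomial and
T̂_ℓ(ε̄,ħ) is a linear operator on ℂ[ρ₁,ρ₂,…]. -/
theorem NS_operator_well_defined_linear (ε hb : ℝ) (hhb : 0 < hb) (ℓ : ℕ) (hℓ : 1 ≤ ℓ) :
    (∀ P : MvP,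
      {t : Fin (ℓ - 1) → ℕ | pathOp ε hb ((0 : ℕ) :: (List.ofFn t ++ [0])) P ≠ 0}.Finite) ∧
    (∀ P Q : MvP, NSop ε hb ℓ (P + Q) = NSop ε hb ℓ P + NSop ε hb ℓ Q) ∧
    (∀ (c : ℂ) (P : MvP), NSop ε hb ℓ (c • P) = c • NSop ε hb ℓ P) := by
  have hfin : ∀ P : MvP,
      {t : Fin (ℓ - 1) → ℕ | pathOp ε hb ((0 : ℕ) :: (List.ofFn t ++ [0])) P ≠ 0}.Finite := by
    intro P
    apply Set.Finite.subset (Set.Finite.pi (fun _ : Fin (ℓ - 1) => Set.finite_Iic (W P)))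
    intro t ht
    have hlast : ((0 : ℕ) :: (List.ofFn t ++ [0])).getLast (List.cons_ne_nil _ _) = 0 := by
      simp
    have hbd := pathOp_mem_bound ε hb P (List.ofFn t ++ [0]) 0 hlast ht
    intro i _
    exact Set.mem_Iic.mpr <| hbd (t i) <| List.mem_cons_of_mem _ <|
      List.mem_append_left _ <| List.mem_ofFn.mpr ⟨i, rfl⟩
  refine ⟨hfin, ?_, ?_⟩
  · intro P Q
    unfold NSop
    have h1 : (Function.support fun t : Fin (ℓ - 1) → ℕ =>
        pathOp ε hb ((0 : ℕ) :: (List.ofFn t ++ [0])) P).Finite := hfin P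
    have h2 : (Function.support fun t : Fin (ℓ - 1) → ℕ =>
        pathOp ε hb ((0 : ℕ) :: (List.ofFn t ++ [0])) Q).Finite := hfin Q
    calc ∑ᶠ t : Fin (ℓ - 1) → ℕ, pathOp ε hb ((0 : ℕ) :: (List.ofFn t ++ [0])) (P + Q)
        = ∑ᶠ t : Fin (ℓ - 1) → ℕ, (pathOp ε hb ((0 : ℕ) :: (List.ofFn t ++ [0])) P
            + pathOp ε hb ((0 : ℕ) :: (List.ofFn t ++ [0])) Q) :=
          finsum_congr fun t => map_add _ _ _
      _ = _ := finsum_add_distrib h1 h2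
  · intro c P
    unfold NSop
    calc ∑ᶠ t : Fin (ℓ - 1) → ℕ, pathOp ε hb ((0 : ℕ) :: (List.ofFn t ++ [0])) (c • P)
        = ∑ᶠ t : Fin (ℓ - 1) → ℕ, c • pathOp ε hb ((0 : ℕ) :: (List.ofFn t ++ [0])) P :=
          finsum_congr fun t => map_smul _ _ _
      _ = _ := (smul_finsum' c (hfin P)).symm
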